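/- Let n ≥ 2 be an integer, γ ∈ (0,1/2), and let u/q be a rational number with u ∈ ℤ, q ∈ ℤ, q ≥ 1. Then for every real x the limit defining U(u/q, x) exists and U(u/q, x) = (1/q)·Σ_{v=0}^{q−1} ( Σ_{w=0}^{q−1} e((u·w^n − v·w)/q) )·f_γ(x + v/q). In particular, x ↦ U(u/q, x) is piecewise constant: it is constant on every interval that contains no point of the finite-modulo-1 set { v/q + σγ + l : 0 ≤ v < q, σ ∈ {+1,−1}, l ∈ ℤ }. -/

import Mathlib

open Filter Finset MeasureTheory

/-- `e(ξ) = exp(2πiξ)`. -/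
noncomputable def ee (ξ : ℝ) : ℂ := Complex.exp (2 * Real.pi * Complex.I * ξ)

/-- The partial sum defining `U(t,x)`:
`2γ + Σ_{0<|k|≤K} (sin(2πγk)/(πk))·e(t·k^n + x·k)`. -/
noncomputable def Upartial (n : ℕ) (γ t x : ℝ) (K : ℕ) : ℂ :=
  Complex.ofReal (2 * γ) +
    ∑ k ∈ (Finset.Icc (-(K : ℤ)) (K : ℤ)).filter (· ≠ 0),
      Complex.ofReal (Real.sin (2 * Real.pi * γ * (k : ℝ)) / (Real.pi * (k : ℝ))) *
        ee (t * (k : ℝ) ^ n + x * (k : ℝ))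

/-- `f_γ`: the 1-periodic function equal to `1` at points whose distance to the nearest
integer is `< γ`, to `1/2` at distance exactly `γ`, and to `0` otherwise. -/
noncomputable def fgam (γ x : ℝ) : ℝ :=
  if |x - round x| < γ then 1 else if |x - round x| = γ then 1 / 2 else 0

/-- The value `(1/q)·Σ_v (Σ_w e((u·w^n − v·w)/q))·f_γ(x + v/q)`. -/
noncomputable def Uq (n : ℕ) (γ : ℝ) (u q : ℤ) (x : ℝ) : ℂ :=
  (q : ℂ)⁻¹ * ∑ v ∈ Finset.range q.toNat,
    (∑ w ∈ Finset.range q.toNat,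
      ee (((u * (w : ℤ) ^ n - (v : ℤ) * (w : ℤ) : ℤ) : ℝ) / (q : ℝ))) *
      Complex.ofReal (fgam γ (x + (v : ℝ) / (q : ℝ)))

/-! At rational time the phase `k ↦ e(u k^n / q)` is `q`-periodic, so finite Fourier inversion
writes it as `q⁻¹ Σ_v S(v) e(v k / q)` with the Weyl sums `S(v) = Σ_w e((u w^n - v w) / q)`.
Substituting this into the partial sums gives `U(u/q, x) = q⁻¹ Σ_v S(v) U(0, x + v/q)`, and
`U(0, ·)` is the Fourier series of `f_γ`: pairing `±k` turns it into a difference of two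
sawtooth series `Σ sin (2πkt) / k`, whose sum `π (1/2 - {t})` is the imaginary part of
`-log (1 - e(t))`. Piecewise constancy holds because `f_γ(y)` can only change where the distance
from `y` to `ℤ`, a continuous function of `y`, passes through `γ`. -/

open Real Topology

lemma ee_add (a b : ℝ) : ee (a + b) = ee a * ee b := by
  rw [ee, ee, ee, ← Complex.exp_add]
  push_cast
  congr 1
  ring

lemma ee_intCast (m : ℤ) : ee m = 1 := by
  rw [ee, ← Complex.exp_int_mul_two_pi_mul_I m]
  push_cast
  congr 1
  ring

lemma ee_zero : ee 0 = 1 := by simpa using ee_intCast 0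

lemma ee_eq_one_iff {ξ : ℝ} : ee ξ = 1 ↔ ∃ m : ℤ, ξ = m := by
  rw [ee, Complex.exp_eq_one_iff]
  refine ⟨fun ⟨m, hm⟩ => ⟨m, ?_⟩, fun ⟨m, hm⟩ => ⟨m, by rw [hm]; push_cast; ring⟩⟩
  have h2πI : 2 * (π : ℂ) * Complex.I ≠ 0 := by simp [Real.pi_ne_zero]
  exact_mod_cast mul_left_cancel₀ h2πI (hm.trans (mul_comm _ _))

lemma ee_pow (ξ : ℝ) (m : ℕ) : ee ξ ^ m = ee (m * ξ) := by
  rw [ee, ee, ← Complex.exp_nat_mul]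
  push_cast
  congr 1
  ring

lemma ee_eq (ξ : ℝ) : ee ξ = Complex.exp ((2 * π * ξ : ℝ) * Complex.I) := by
  rw [ee]
  push_cast
  congr 1
  ring

lemma norm_ee (ξ : ℝ) : ‖ee ξ‖ = 1 := by
  rw [ee_eq]
  exact Complex.norm_exp_ofReal_mul_I _

lemma im_ee (ξ : ℝ) : (ee ξ).im = Real.sin (2 * π * ξ) := by
  rw [ee_eq]
  exact Complex.exp_ofReal_mul_I_im _

lemma ee_add_ee_neg (ξ : ℝ) : ee ξ + ee (-ξ) = ((2 * Real.cos (2 * π * ξ) : ℝ) : ℂ) := by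
  rw [ee_eq, ee_eq, mul_neg, Complex.ofReal_neg, Complex.exp_mul_I, Complex.exp_mul_I,
    Complex.cos_neg, Complex.sin_neg]
  push_cast
  ring

lemma ee_intCast_div_eq_of_dvd {q a b : ℤ} (h : q ∣ a - b) : ee (a / q) = ee (b / q) := by
  obtain ⟨d, hd⟩ := h
  rcases eq_or_ne q 0 with rfl | hq
  · simp_all [sub_eq_zero]
  rw [show (a : ℝ) / q = b / q + (d : ℤ) by
    rw [eq_add_of_sub_eq' hd]; push_cast; field_simp, ee_add, ee_intCast, mul_one]

lemma sum_range_ee_mul_div {q : ℕ} (hq : q ≠ 0) (m : ℤ) :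
    ∑ v ∈ range q, ee (v * m / q) = if (q : ℤ) ∣ m then (q : ℂ) else 0 := by
  have hqR : (q : ℝ) ≠ 0 := by exact_mod_cast hq
  simp_rw [show ∀ v : ℕ, (v : ℝ) * m / q = v * (m / q) by intro v; ring, ← ee_pow]
  split_ifs with hdvd
  · obtain ⟨d, rfl⟩ := hdvd
    rw [show ((q * d : ℤ) : ℝ) / q = (d : ℤ) by push_cast; field_simp, ee_intCast]
    simp
  · have hne : ee (m / q) ≠ 1 := by
      rw [Ne, ee_eq_one_iff]
      rintro ⟨d, hd⟩
      exact hdvd ⟨d, by rw [div_eq_iff hqR] at hd; exact_mod_cast hd.trans (mul_comm _ _)⟩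
    rw [geom_sum_eq hne, ee_pow, mul_div_cancel₀ _ hqR, ee_intCast, sub_self, zero_div]

lemma sum_range_fourier_inversion_of_periodic {q : ℕ} (hq : q ≠ 0) {f : ℤ → ℂ}
    (hf : Function.Periodic f q) (k : ℤ) :
    ∑ v ∈ range q, (∑ w ∈ range q, f w * ee (-(v * w) / q)) * ee (v * k / q) = q * f k := by
  set r := (k % q).toNat
  have hr : (r : ℤ) = k % q := Int.toNat_of_nonneg (Int.emod_nonneg _ (by omega))
  have hrq : r < q := by have := Int.emod_lt_of_pos k (show (0 : ℤ) < q by omega); omega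
  have hdvd : ∀ w ∈ range q, (q : ℤ) ∣ k - w ↔ w = r := fun w hw => by
    rw [← Int.modEq_iff_dvd, Int.ModEq, Int.emod_eq_of_lt (by omega) (by simp at hw; omega)]
    omega
  calc ∑ v ∈ range q, (∑ w ∈ range q, f w * ee (-(v * w) / q)) * ee (v * k / q)
      = ∑ w ∈ range q, f w * ∑ v ∈ range q, ee (v * ((k - w : ℤ) : ℝ) / q) := by
        simp_rw [sum_mul, mul_sum, mul_assoc, ← ee_add]
        rw [sum_comm]
        congr! 4
        push_cast
        ring
    _ = ∑ w ∈ range q, if w = r then f w * q else 0 := sum_congr rfl fun w hw => by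
        rw [sum_range_ee_mul_div hq, mul_ite, mul_zero, if_congr (hdvd w hw) rfl rfl]
    _ = q * f k := by
        rw [sum_ite_eq' (range q) r, if_pos (mem_range.2 hrq), mul_comm, hr, Int.emod_def,
          mul_comm (q : ℤ), ← smul_eq_mul (k / q), hf.sub_zsmul_eq]

lemma periodic_ee_mul_pow_div (u : ℤ) (n q : ℕ) :
    Function.Periodic (fun k : ℤ => ee ((u * k ^ n : ℤ) / q)) q := by
  intro k
  have hdvd : (q : ℤ) ∣ u * (k + q) ^ n - u * k ^ n := by
    rw [← mul_sub]
    exact dvd_mul_of_dvd_right (Int.add_modEq_right.symm.pow n).dvd u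
  simpa using ee_intCast_div_eq_of_dvd hdvd

noncomputable def weylSum (n : ℕ) (u : ℤ) (q v : ℕ) : ℂ :=
  ∑ w ∈ range q, ee (((u * (w : ℤ) ^ n - (v : ℤ) * (w : ℤ) : ℤ) : ℝ) / q)

lemma sum_weylSum_mul_ee {q : ℕ} (hq : q ≠ 0) (n : ℕ) (u k : ℤ) :
    ∑ v ∈ range q, weylSum n u q v * ee (v * k / q) = q * ee ((u * k ^ n : ℤ) / q) := by
  rw [← sum_range_fourier_inversion_of_periodic hq (periodic_ee_mul_pow_div u n q) k]
  congr! 2 with v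
  refine sum_congr rfl fun w _ => ?_
  rw [← ee_add]
  congr 1
  push_cast
  ring

lemma sum_weylSum {q n : ℕ} (hq : q ≠ 0) (hn : n ≠ 0) (u : ℤ) :
    ∑ v ∈ range q, weylSum n u q v = q := by
  simpa [zero_pow hn, ee_zero] using sum_weylSum_mul_ee hq n u 0

lemma Upartial_div_eq_sum_weylSum {q n : ℕ} (hq : q ≠ 0) (hn : n ≠ 0) (γ : ℝ) (u : ℤ) (x : ℝ)
    (K : ℕ) :
    Upartial n γ (u / q) x K =
      (q : ℂ)⁻¹ * ∑ v ∈ range q, weylSum n u q v * Upartial n γ 0 (x + v / q) K := by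
  have hqC : (q : ℂ) ≠ 0 := by exact_mod_cast hq
  simp only [Upartial, zero_mul, zero_add, mul_add, sum_add_distrib, mul_sum]
  congr 1
  · rw [← mul_sum, ← sum_mul, sum_weylSum hq hn, inv_mul_cancel_left₀ hqC]
  rw [sum_comm]
  refine sum_congr rfl fun k _ => ?_
  have hsplit : ∀ v : ℕ, ee ((x + v / q) * k) = ee (v * k / q) * ee (x * k) := fun v => by
    rw [← ee_add]; congr 1; ring
  rw [show (u : ℝ) / q * k ^ n + x * k = ((u * k ^ n : ℤ) : ℝ) / q + x * k by push_cast; ring,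
    ee_add, ← inv_mul_cancel_left₀ hqC (ee _), ← sum_weylSum_mul_ee hq, mul_sum, sum_mul, mul_sum]
  simp_rw [hsplit]
  refine sum_congr rfl fun v _ => by ring

open Complex in
lemma one_sub_mem_slitPlane_of_norm_eq_one {z : ℂ} (hz : ‖z‖ = 1) (hz1 : z ≠ 1) :
    1 - z ∈ slitPlane := by
  have hsq : z.re * z.re + z.im * z.im = 1 := by
    rw [← normSq_apply, ← Complex.sq_norm, hz, one_pow]
  have hre : z.re < 1 := by
    refine (hz ▸ re_le_norm z).lt_of_ne fun h => hz1 (Complex.ext h ?_)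
    rw [h] at hsq
    simpa using hsq
  refine Or.inl ?_
  simp only [sub_re, one_re]
  linarith

open Complex in
lemma tendsto_sum_range_pow_div_of_norm_eq_one {z : ℂ} (hz : ‖z‖ = 1) (hz1 : z ≠ 1) :
    Tendsto (fun N => ∑ k ∈ range N, z ^ k / k) atTop (𝓝 (-log (1 - z))) := by
  have hbound : ∀ m, ‖∑ i ∈ range m, z ^ (i + 1)‖ ≤ 2 / ‖z - 1‖ := fun m => by
    simp_rw [pow_succ, ← sum_mul, norm_mul, hz, mul_one, geom_sum_eq hz1, norm_div]
    gcongr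
    calc ‖z ^ m - 1‖ ≤ ‖z ^ m‖ + ‖(1 : ℂ)‖ := norm_sub_le _ _
      _ = 2 := by rw [norm_pow, hz]; norm_num
  have hanti : Antitone fun i : ℕ => (1 : ℝ) / (i + 1) := fun i j hij =>
    one_div_le_one_div_of_le (by positivity) (by exact_mod_cast Nat.succ_le_succ hij)
  -- Dirichlet's test gives convergence, Abel's theorem then identifies the limit.
  obtain ⟨L, hL⟩ := cauchySeq_tendsto_of_complete <|
    hanti.cauchySeq_series_mul_of_tendsto_zero_of_bounded tendsto_one_div_add_atTop_nhds_zero_nat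
      hbound
  have hsum : Tendsto (fun N => ∑ k ∈ range N, z ^ k / k) atTop (𝓝 L) := by
    rw [← tendsto_add_atTop_iff_nat 1]
    refine hL.congr fun N => ?_
    simp [sum_range_succ', div_eq_inv_mul]
  have hlog : Tendsto (fun r : ℝ => -log (1 - r * z)) (𝓝[<] 1) (𝓝 (-log (1 - z))) := by
    refine (Tendsto.clog ?_ (one_sub_mem_slitPlane_of_norm_eq_one hz hz1)).neg
    refine tendsto_nhdsWithin_of_tendsto_nhds ?_
    have hc : Continuous fun r : ℝ => 1 - (r : ℂ) * z := by fun_prop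
    simpa using hc.tendsto 1
  have htaylor : ∀ᶠ r : ℝ in 𝓝[<] 1, ∑' k : ℕ, z ^ k / k * (r : ℂ) ^ k = -log (1 - r * z) := by
    filter_upwards [Ioo_mem_nhdsLT (show (-1 : ℝ) < 1 by norm_num)] with r hr
    have hrz : ‖(r : ℂ) * z‖ < 1 := by
      rw [norm_mul, hz, mul_one, norm_real, Real.norm_eq_abs, abs_lt]
      exact hr
    rw [← (hasSum_taylorSeries_neg_log hrz).tsum_eq]
    exact tsum_congr fun k => by rw [mul_pow]; ring
  have habel := tendsto_map'_iff.1 (Complex.tendsto_tsum_powerSeries_nhdsWithin_lt hsum)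
  rwa [tendsto_nhds_unique (habel.congr' htaylor) hlog] at hsum

open Complex in
lemma im_neg_log_one_sub_ee {θ : ℝ} (hθ : θ ∈ Set.Ioo 0 1) :
    (-log (1 - ee θ)).im = π * (1 / 2 - θ) := by
  obtain ⟨hθ0, hθ1⟩ := hθ
  have hsin : 0 < Real.sin (π * θ) :=
    Real.sin_pos_of_pos_of_lt_pi (by positivity) (by nlinarith [Real.pi_pos])
  have hpolar : 1 - ee θ = ↑(2 * Real.sin (π * θ)) *
      (Complex.cos ↑(π * θ - π / 2) + Complex.sin ↑(π * θ - π / 2) * I) := by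
    rw [ee_eq, ← ofReal_cos, ← ofReal_sin, Real.cos_sub_pi_div_two, Real.sin_sub_pi_div_two,
      show 2 * π * θ = 2 * (π * θ) by ring]
    apply Complex.ext <;>
      simp only [sub_re, sub_im, one_re, one_im, exp_ofReal_mul_I_re, exp_ofReal_mul_I_im, mul_re,
        mul_im, add_re, add_im, ofReal_re, ofReal_im, I_re, I_im]
    · rw [Real.cos_two_mul, Real.cos_sq']
      ring
    · rw [Real.sin_two_mul]
      ring
  rw [neg_im, log_im, hpolar, arg_mul_cos_add_sin_mul_I (by positivity)
    ⟨by nlinarith [Real.pi_pos], by nlinarith [Real.pi_pos]⟩]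
  ring

lemma tendsto_sum_sin_div {θ : ℝ} (hθ : θ ∈ Set.Ioo 0 1) :
    Tendsto (fun N => ∑ k ∈ range N, Real.sin (2 * π * k * θ) / k) atTop (𝓝 (π * (1 / 2 - θ))) := by
  have hne : ee θ ≠ 1 := by
    rw [Ne, ee_eq_one_iff]
    rintro ⟨m, rfl⟩
    obtain ⟨h0, h1⟩ := hθ
    have : (0 : ℤ) < m := by exact_mod_cast h0
    have : m < (1 : ℤ) := by exact_mod_cast h1
    omega
  have h := (Complex.continuous_im.tendsto _).comp
    (tendsto_sum_range_pow_div_of_norm_eq_one (norm_ee θ) hne)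
  rw [im_neg_log_one_sub_ee hθ] at h
  refine h.congr fun N => ?_
  simp only [Function.comp_apply, Complex.im_sum, ee_pow, Complex.div_natCast_im, im_ee]
  congr! 2 with k
  rw [mul_assoc _ (k : ℝ)]

-- The sum of `∑ sin (2πkt) / k`, with the midpoint `0` of the jump at integers.
noncomputable def sawtooth (t : ℝ) : ℝ :=
  if Int.fract t = 0 then 0 else π * (1 / 2 - Int.fract t)

lemma sawtooth_add_intCast (t : ℝ) (m : ℤ) : sawtooth (t + m) = sawtooth t := by
  simp [sawtooth]

lemma sawtooth_zero : sawtooth 0 = 0 := by simp [sawtooth]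

lemma sawtooth_of_mem_Ioo {t : ℝ} (ht : t ∈ Set.Ioo 0 1) : sawtooth t = π * (1 / 2 - t) := by
  rw [sawtooth, Int.fract_eq_self.2 ⟨ht.1.le, ht.2⟩, if_neg ht.1.ne']

lemma sawtooth_of_mem_Ioo_neg {t : ℝ} (ht : t ∈ Set.Ioo (-1) 0) :
    sawtooth t = π * (-1 / 2 - t) := by
  rw [← sawtooth_add_intCast t 1, Int.cast_one,
    sawtooth_of_mem_Ioo ⟨by linarith [ht.1], by linarith [ht.2]⟩]
  ring

lemma tendsto_sum_sin_div_sawtooth (t : ℝ) :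
    Tendsto (fun N => ∑ k ∈ range N, Real.sin (2 * π * k * t) / k) atTop (𝓝 (sawtooth t)) := by
  have hper : ∀ k : ℕ, Real.sin (2 * π * k * t) = Real.sin (2 * π * k * Int.fract t) := fun k => by
    rw [Int.fract, show 2 * π * k * (t - ⌊t⌋) = 2 * π * k * t - ((k * ⌊t⌋ : ℤ) : ℝ) * (2 * π) by
      push_cast; ring, Real.sin_sub_int_mul_two_pi]
  simp_rw [hper, sawtooth]
  split_ifs with h
  · simp [h]
  · exact tendsto_sum_sin_div ⟨(Int.fract_nonneg t).lt_of_ne' h, Int.fract_lt_one t⟩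

lemma fgam_eq_sawtooth {γ : ℝ} (hγ : γ ∈ Set.Ioo 0 (1 / 2)) (y : ℝ) :
    fgam γ y = 2 * γ + (sawtooth (y + γ) - sawtooth (y - γ)) / π := by
  obtain ⟨hγ0, hγ1⟩ := hγ
  set s := y - round y with hs
  have hs_le := abs_le.1 (abs_sub_round y)
  have hshift : ∀ c, sawtooth (y + c) = sawtooth (s + c) := fun c => by
    rw [← sawtooth_add_intCast (s + c) (round y), hs]
    ring_nf
  rw [fgam, ← hs, hshift, sub_eq_add_neg y γ, hshift, ← sub_eq_add_neg]
  have hπ := Real.pi_ne_zero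
  rcases lt_trichotomy |s| γ with hlt | heq | hgt
  · obtain ⟨h1, h2⟩ := abs_lt.1 hlt
    rw [if_pos hlt, sawtooth_of_mem_Ioo ⟨by linarith, by linarith⟩,
      sawtooth_of_mem_Ioo_neg ⟨by linarith, by linarith⟩]
    field_simp
    ring
  · rw [if_neg heq.not_lt, if_pos heq]
    rcases (abs_eq hγ0.le).1 heq with h | h <;> rw [h]
    · rw [sub_self, sawtooth_zero, sawtooth_of_mem_Ioo ⟨by linarith, by linarith⟩]
      field_simp
      ring
    · rw [neg_add_cancel, sawtooth_zero, sawtooth_of_mem_Ioo_neg ⟨by linarith, by linarith⟩]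
      field_simp
      ring
  · rw [if_neg (by linarith), if_neg hgt.ne']
    rcases le_or_gt 0 s with hpos | hneg
    · rw [abs_of_nonneg hpos] at hgt
      rw [sawtooth_of_mem_Ioo ⟨by linarith, by linarith⟩,
        sawtooth_of_mem_Ioo ⟨by linarith, by linarith⟩]
      field_simp
      ring
    · rw [abs_of_neg hneg] at hgt
      rw [sawtooth_of_mem_Ioo_neg ⟨by linarith, by linarith⟩,
        sawtooth_of_mem_Ioo_neg ⟨by linarith, by linarith⟩]
      field_simp
      ring

lemma sum_Icc_filter_ne_zero {M : Type*} [AddCommMonoid M] {g : ℤ → M} (hg : g 0 = 0) (K : ℕ) :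
    ∑ k ∈ Icc (-(K : ℤ)) K with k ≠ 0, g k = ∑ k ∈ range (K + 1), (g k + g (-k)) := by
  rw [sum_filter_of_ne fun k _ hgk => by rintro rfl; exact hgk hg]
  induction K with
  | zero => simp [hg]
  | succ K ih =>
    have hIcc : Icc (-((K + 1 : ℕ) : ℤ)) (K + 1 : ℕ) =
        insert (-((K + 1 : ℕ) : ℤ)) (insert ((K + 1 : ℕ) : ℤ) (Icc (-(K : ℤ)) K)) := by
      ext k
      simp only [mem_Icc, mem_insert]
      omega
    rw [hIcc, sum_insert (by simp; omega), sum_insert (by simp), ih, sum_range_succ _ (K + 1)]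
    abel

lemma Upartial_zero_eq (n : ℕ) (γ y : ℝ) (K : ℕ) :
    Upartial n γ 0 y K = ↑(2 * γ + (∑ k ∈ range (K + 1), Real.sin (2 * π * k * (y + γ)) / k -
      ∑ k ∈ range (K + 1), Real.sin (2 * π * k * (y - γ)) / k) / π) := by
  have hpair : ∀ k : ℝ, ↑(Real.sin (2 * π * γ * k) / (π * k)) * ee (y * k) +
      ↑(Real.sin (2 * π * γ * -k) / (π * -k)) * ee (y * -k) =
      (↑((Real.sin (2 * π * k * (y + γ)) - Real.sin (2 * π * k * (y - γ))) / k / π) : ℂ) := by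
    intro k
    rw [mul_neg, mul_neg, Real.sin_neg, neg_div_neg_eq, ← mul_add, mul_neg, ee_add_ee_neg,
      ← Complex.ofReal_mul, show 2 * π * k * (y + γ) = 2 * π * (y * k) + 2 * π * γ * k by ring,
      show 2 * π * k * (y - γ) = 2 * π * (y * k) - 2 * π * γ * k by ring, Real.sin_add,
      Real.sin_sub]
    congr 1
    ring
  simp only [Upartial, zero_mul, zero_add]
  rw [sum_Icc_filter_ne_zero (by simp), ← sum_sub_distrib, sum_div, Complex.ofReal_add,
    Complex.ofReal_sum]
  refine congrArg _ (sum_congr rfl fun k _ => ?_)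
  simp only [Int.cast_natCast, Int.cast_neg, hpair, sub_div]

lemma tendsto_Upartial_zero (n : ℕ) {γ : ℝ} (hγ : γ ∈ Set.Ioo 0 (1 / 2)) (y : ℝ) :
    Tendsto (Upartial n γ 0 y) atTop (𝓝 (fgam γ y)) := by
  rw [funext (Upartial_zero_eq n γ y), fgam_eq_sawtooth hγ]
  refine (Complex.continuous_ofReal.tendsto _).comp (((Tendsto.sub ?_ ?_).div_const π).const_add _)
  all_goals exact (tendsto_add_atTop_iff_nat 1).2 (tendsto_sum_sin_div_sawtooth _)

lemma fgam_add_eq_of_isPreconnected {γ c : ℝ} {I : Set ℝ} (hI : IsPreconnected I)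
    (h : ∀ y ∈ I, |y + c - round (y + c)| ≠ γ) {x₁ x₂ : ℝ} (hx₁ : x₁ ∈ I) (hx₂ : x₂ ∈ I) :
    fgam γ (x₁ + c) = fgam γ (x₂ + c) := by
  set g : ℝ → ℝ := fun y => |y + c - round (y + c)|
  have hg : Continuous g := by
    have : g = fun y => ‖((y + c : ℝ) : UnitAddCircle)‖ :=
      funext fun y => UnitAddCircle.norm_eq.symm
    rw [this]
    exact continuous_norm.comp ((AddCircle.continuous_mk' 1).comp (continuous_add_const c))
  have hJ := (hI.image g hg.continuousOn).ordConnected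
  have hside : ∀ a ∈ I, ∀ b ∈ I, g a < γ → g b ≤ γ := fun a ha b hb ha' => by
    by_contra! hb'
    obtain ⟨y, hy, hyγ⟩ := hJ.out (Set.mem_image_of_mem g ha) (Set.mem_image_of_mem g hb)
      ⟨ha'.le, hb'.le⟩
    exact h y hy hyγ
  have hiff : g x₁ < γ ↔ g x₂ < γ :=
    ⟨fun h₁ => (hside x₁ hx₁ x₂ hx₂ h₁).lt_of_ne (h x₂ hx₂),
      fun h₂ => (hside x₂ hx₂ x₁ hx₁ h₂).lt_of_ne (h x₁ hx₁)⟩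
  simp only [fgam, g] at hiff ⊢
  rw [if_neg (h x₁ hx₁), if_neg (h x₂ hx₂)]
  exact if_congr hiff rfl rfl

lemma exists_eq_div_add_mul_add_int {q v : ℕ} (hv : v < q) {γ y : ℝ}
    (h : |y + v / q - round (y + v / q)| = γ) :
    ∃ (v' : ℕ) (σ : ℝ) (l : ℤ), v' < q ∧ (σ = 1 ∨ σ = -1) ∧ y = v' / q + σ * γ + l := by
  have hγ : 0 ≤ γ := h ▸ abs_nonneg _
  obtain ⟨σ, hσ, hy⟩ : ∃ σ : ℝ, (σ = 1 ∨ σ = -1) ∧ y + v / q - round (y + v / q) = σ * γ := by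
    rcases (abs_eq hγ).1 h with h' | h'
    · exact ⟨1, Or.inl rfl, by rw [h', one_mul]⟩
    · exact ⟨-1, Or.inr rfl, by rw [h', neg_one_mul]⟩
  rcases Nat.eq_zero_or_pos v with rfl | hv0
  · exact ⟨0, σ, round (y + 0 / q), hv, hσ, by
      simp only [Nat.cast_zero, zero_div, add_zero] at hy ⊢
      linarith⟩
  · refine ⟨q - v, σ, round (y + v / q) - 1, by omega, hσ, ?_⟩
    have hq : (q : ℝ) ≠ 0 := Nat.cast_ne_zero.2 (by omega)
    rw [Nat.cast_sub hv.le, sub_div, div_self hq]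
    push_cast
    linarith

/-- at rational time `t = u/q` the limit defining `U(u/q,x)` exists and equals
`(1/q)·Σ_v (Σ_w e((u·w^n − v·w)/q))·f_γ(x + v/q)`; in particular `x ↦ U(u/q,x)` is constant
on every interval containing no point of `{v/q + σγ + l}`. -/
theorem stmt10 (n : ℕ) (hn : 2 ≤ n) (γ : ℝ) (hγ : γ ∈ Set.Ioo (0 : ℝ) (1 / 2))
    (u q : ℤ) (hq : 1 ≤ q) :
    (∀ x : ℝ, Tendsto (fun K : ℕ => Upartial n γ ((u : ℝ) / (q : ℝ)) x K) atTop
      (nhds (Uq n γ u q x))) ∧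
    (∀ I : Set ℝ, I.OrdConnected →
      (∀ y ∈ I, ¬ ∃ (v : ℕ) (σ : ℝ) (l : ℤ),
        v < q.toNat ∧ (σ = 1 ∨ σ = -1) ∧ y = (v : ℝ) / (q : ℝ) + σ * γ + (l : ℝ)) →
      ∀ x₁ ∈ I, ∀ x₂ ∈ I, Uq n γ u q x₁ = Uq n γ u q x₂) := by
  lift q to ℕ using (by omega)
  have hUq : ∀ x, Uq n γ u q x =
      (q : ℂ)⁻¹ * ∑ v ∈ range q, weylSum n u q v * fgam γ (x + v / q) := fun x => by
    simp [Uq, weylSum]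
  simp only [Int.cast_natCast, Int.toNat_natCast, hUq]
  refine ⟨fun x => ?_, fun I hI hbad x₁ hx₁ x₂ hx₂ => ?_⟩
  · simp_rw [Upartial_div_eq_sum_weylSum (q := q) (n := n) (by omega) (by omega)]
    exact (tendsto_finsetSum _ fun v _ =>
      (tendsto_Upartial_zero n hγ _).const_mul _).const_mul _
  · refine congrArg _ (sum_congr rfl fun v hv => ?_)
    rw [fgam_add_eq_of_isPreconnected hI.isPreconnected
      (fun y hy h => hbad y hy (exists_eq_div_add_mul_add_int (mem_range.1 hv) h)) hx₁ hx₂]
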